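/- A map p : M → N between MV-algebras with p(0) = 0 and p(1) = 1 is a probability map if and only if for all a, b ∈ M with a ⊙ b = 0 it satisfies both p(a ⊕ b) = p(a) ⊕ p(b) and p(a) ⊙ p(b) = 0. -/

import Mathlib

/-- An MV-algebra: a commutative monoid `(M, ⊕, 0)` with an involutive negation
satisfying `a ⊕ ¬0 = ¬0` and the Łukasiewicz axiom. -/
structure MVAlgebra (M : Type*) where
  oplus : M → M → M
  mvneg : M → M
  zero : M
  oplus_assoc : ∀ a b c, oplus (oplus a b) c = oplus a (oplus b c)
  oplus_comm : ∀ a b, oplus a b = oplus b a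
  oplus_zero : ∀ a, oplus a zero = a
  mvneg_mvneg : ∀ a, mvneg (mvneg a) = a
  oplus_neg_zero : ∀ a, oplus a (mvneg zero) = mvneg zero
  luk : ∀ a b, oplus (mvneg (oplus (mvneg a) b)) b = oplus (mvneg (oplus (mvneg b) a)) a

namespace MVAlgebra

variable {M : Type*} (A : MVAlgebra M)

/-- `1 := ¬0`. -/
def one : M := A.mvneg A.zero

/-- `a ⊙ b := ¬(¬a ⊕ ¬b)`. -/
def otimes (a b : M) : M := A.mvneg (A.oplus (A.mvneg a) (A.mvneg b))

/-- `a ⊖ b := a ⊙ ¬b`. -/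
def ominus (a b : M) : M := A.otimes a (A.mvneg b)

/-- `a ∨ b := ¬(¬a ⊕ b) ⊕ b`. -/
def sup (a b : M) : M := A.oplus (A.mvneg (A.oplus (A.mvneg a) b)) b

/-- `a ∧ b := a ⊙ (¬a ⊕ b)`. -/
def inf (a b : M) : M := A.otimes a (A.oplus (A.mvneg a) b)

/-- The natural order: `a ≤ b` iff `¬a ⊕ b = 1`. -/
def le (a b : M) : Prop := A.oplus (A.mvneg a) b = A.one

end MVAlgebra

/-- A probability map `p : M → N` between MV-algebras:
(P1) `p(a ⊕ b) = p(a) ⊕ p(b ∧ ¬a)`, (P2) `p(¬a) = ¬p(a)`, (P3) `p(1) = 1`. -/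
structure IsProbabilityMap {M N : Type*} (A : MVAlgebra M) (B : MVAlgebra N)
    (p : M → N) : Prop where
  p1 : ∀ a b, p (A.oplus a b) = B.oplus (p a) (p (A.inf b (A.mvneg a)))
  p2 : ∀ a, p (A.mvneg a) = B.mvneg (p a)
  p3 : p A.one = B.one

/-! If `a ⊙ b = 0` then `b ≤ ¬a`, so `b ∧ ¬a = b` and (P1) gives additivity; writing
`¬a = b ⊕ (¬a ⊖ b)` and applying (P1) shows `p(b) ≤ ¬p(a)`, i.e. `p(a) ⊙ p(b) = 0`.
Conversely, `a ⊕ b = a ⊕ (b ∧ ¬a)` with `a ⊙ (b ∧ ¬a) = 0` gives (P1), and applying the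
hypothesis to `a, ¬a` exhibits `p(¬a)` as a complement of `p(a)`, which is unique. -/

namespace MVAlgebra

variable {M : Type*} (A : MVAlgebra M)

lemma mvneg_one : A.mvneg A.one = A.zero := A.mvneg_mvneg A.zero

lemma mvneg_injective : Function.Injective A.mvneg :=
  Function.LeftInverse.injective A.mvneg_mvneg

lemma mvneg_eq_zero_iff {a : M} : A.mvneg a = A.zero ↔ a = A.one := by
  rw [← A.mvneg_one, A.mvneg_injective.eq_iff]

lemma zero_oplus (a : M) : A.oplus A.zero a = a := by
  rw [A.oplus_comm, A.oplus_zero]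

lemma oplus_one (a : M) : A.oplus a A.one = A.one := A.oplus_neg_zero a

lemma one_oplus (a : M) : A.oplus A.one a = A.one := by
  rw [A.oplus_comm, A.oplus_one]

lemma mvneg_oplus_self (a : M) : A.oplus (A.mvneg a) a = A.one := by
  simpa only [mvneg_one, zero_oplus, oplus_one] using A.luk A.one a

lemma oplus_mvneg_self (a : M) : A.oplus a (A.mvneg a) = A.one := by
  rw [A.oplus_comm, A.mvneg_oplus_self]

lemma mvneg_oplus_oplus_cancel (a b : M) : A.oplus (A.mvneg a) (A.oplus a b) = A.one := by
  rw [← A.oplus_assoc, A.mvneg_oplus_self, A.one_oplus]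

lemma otimes_eq_zero_iff {a b : M} :
    A.otimes a b = A.zero ↔ A.oplus (A.mvneg a) (A.mvneg b) = A.one :=
  A.mvneg_eq_zero_iff

lemma otimes_mvneg_self (a : M) : A.otimes a (A.mvneg a) = A.zero := by
  rw [otimes_eq_zero_iff, A.mvneg_mvneg, A.mvneg_oplus_self]

lemma le_antisymm {a b : M} (hab : A.le a b) (hba : A.le b a) : a = b := by
  have h := A.luk a b
  rw [hab, hba, mvneg_one, zero_oplus, zero_oplus] at h
  exact h.symm

lemma eq_mvneg_of_oplus_eq_one_of_otimes_eq_zero {a b : M} (h₁ : A.oplus a b = A.one)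
    (h₀ : A.otimes a b = A.zero) : b = A.mvneg a := by
  apply A.le_antisymm
  · rw [le, A.oplus_comm, ← A.otimes_eq_zero_iff]
    exact h₀
  · rw [le, A.mvneg_mvneg]
    exact h₁

lemma oplus_otimes_mvneg_of_le {a b : M} (h : A.le a b) :
    A.oplus a (A.otimes b (A.mvneg a)) = b := by
  rw [otimes, A.mvneg_mvneg, A.oplus_comm, A.luk, h, mvneg_one, zero_oplus]

lemma inf_mvneg_eq (a b : M) :
    A.inf b (A.mvneg a) = A.mvneg (A.oplus (A.mvneg (A.oplus b a)) a) := by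
  have h := A.luk a (A.mvneg b)
  rw [A.mvneg_mvneg] at h
  rw [inf, otimes, A.oplus_comm (A.mvneg b), A.oplus_comm (A.mvneg b) (A.mvneg a), h]

lemma oplus_inf_mvneg (a b : M) : A.oplus a (A.inf b (A.mvneg a)) = A.oplus a b := by
  rw [inf_mvneg_eq, A.oplus_comm, A.luk, A.oplus_comm b a, A.mvneg_oplus_oplus_cancel,
    mvneg_one, zero_oplus]

lemma otimes_inf_mvneg (a b : M) : A.otimes a (A.inf b (A.mvneg a)) = A.zero := by
  rw [otimes_eq_zero_iff, inf_mvneg_eq, A.mvneg_mvneg, A.oplus_comm _ a, A.oplus_comm b a,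
    ← A.oplus_assoc, A.mvneg_oplus_self, A.one_oplus]

lemma inf_mvneg_of_otimes_eq_zero {a b : M} (h : A.otimes a b = A.zero) :
    A.inf b (A.mvneg a) = b := by
  rw [otimes_eq_zero_iff] at h
  rw [inf, otimes, A.oplus_comm (A.mvneg b) (A.mvneg a), h, mvneg_one, A.oplus_zero,
    A.mvneg_mvneg]

end MVAlgebra

namespace IsProbabilityMap

variable {M N : Type*} {A : MVAlgebra M} {B : MVAlgebra N} {p : M → N}

lemma map_oplus_of_otimes_eq_zero (hp : IsProbabilityMap A B p) {a b : M}
    (hab : A.otimes a b = A.zero) : p (A.oplus a b) = B.oplus (p a) (p b) := by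
  rw [hp.p1, A.inf_mvneg_of_otimes_eq_zero hab]

lemma otimes_map_eq_zero (hp : IsProbabilityMap A B p) {a b : M}
    (hab : A.otimes a b = A.zero) : B.otimes (p a) (p b) = B.zero := by
  have hle : A.le b (A.mvneg a) := by
    rw [MVAlgebra.le, A.oplus_comm]
    exact A.otimes_eq_zero_iff.mp hab
  have hdecomp :
      B.mvneg (p a) = B.oplus (p b) (p (A.inf (A.ominus (A.mvneg a) b) (A.mvneg b))) := by
    rw [← hp.p2, ← hp.p1, MVAlgebra.ominus, A.oplus_otimes_mvneg_of_le hle]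
  rw [B.otimes_eq_zero_iff, B.oplus_comm, hdecomp, B.mvneg_oplus_oplus_cancel]

end IsProbabilityMap

lemma isProbabilityMap_of_otimes_eq_zero {M N : Type*} {A : MVAlgebra M} {B : MVAlgebra N}
    {p : M → N} (h1 : p A.one = B.one)
    (H : ∀ a b : M, A.otimes a b = A.zero →
      p (A.oplus a b) = B.oplus (p a) (p b) ∧ B.otimes (p a) (p b) = B.zero) :
    IsProbabilityMap A B p := by
  refine ⟨fun a b => ?_, fun a => ?_, h1⟩
  · rw [← (H a _ (A.otimes_inf_mvneg a b)).1, A.oplus_inf_mvneg]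
  · obtain ⟨hsum, hprod⟩ := H a (A.mvneg a) (A.otimes_mvneg_self a)
    refine B.eq_mvneg_of_oplus_eq_one_of_otimes_eq_zero ?_ hprod
    rw [← hsum, A.oplus_mvneg_self, h1]

theorem probabilityMap_iff_general {M N : Type*} (A : MVAlgebra M) (B : MVAlgebra N)
    (p : M → N) (h1 : p A.one = B.one) :
    IsProbabilityMap A B p ↔
      ∀ a b : M, A.otimes a b = A.zero →
        p (A.oplus a b) = B.oplus (p a) (p b) ∧ B.otimes (p a) (p b) = B.zero :=
  ⟨fun hp _ _ hab => ⟨hp.map_oplus_of_otimes_eq_zero hab, hp.otimes_map_eq_zero hab⟩,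
    isProbabilityMap_of_otimes_eq_zero h1⟩

/-- A normalised map is a probability map iff, whenever `a ⊙ b = 0`,
it satisfies `p(a ⊕ b) = p(a) ⊕ p(b)` and `p(a) ⊙ p(b) = 0`. -/
theorem probabilityMap_iff {M N : Type*} (A : MVAlgebra M) (B : MVAlgebra N)
    (p : M → N) (h0 : p A.zero = B.zero) (h1 : p A.one = B.one) :
    IsProbabilityMap A B p ↔
      ∀ a b : M, A.otimes a b = A.zero →
        p (A.oplus a b) = B.oplus (p a) (p b) ∧ B.otimes (p a) (p b) = B.zero :=
  probabilityMap_iff_general A B p h1
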